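/- Let 2 ≤ i ≤ d, 1 ≤ l ≤ i−1, a ≥ 0, and l + a ≤ j ≤ d. Assume that for every k with l ≤ k ≤ i−1 and i ≤ k+l+a ≤ d, the binomial coefficient C(k,l) is even. Let τ ∈ S_{i+1} be the cyclic permutation (0 1 ⋯ i) and define, in A^{⊗(i+1)}: v := Σ_{k=l}^{i−1} C(k,l)·( h_{k+l+a} ⊗ sym_{S_i}( (⊗_{s=0, s≠k}^{i−1} h_s) ⊗ l_j ) ) + l_{j−l−a} ⊗ sym_{S_i}( ⊗_{t=0}^{i−1} h_t ), where h_t := 0 for t > d and binomial coefficients are taken mod 2. Then Σ_{r=0}^{i} τ^r·v = sym_{S_{i+1}}( h_0 ⊗ ⋯ ⊗ h_{i−1} ⊗ l_{j−l−a} ) = ρ_{i, j−l−a}. -/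

import Mathlib

/-!
The powers `τ^r`, `0 ≤ r ≤ i`, of the rotation are coset representatives of the stabilizer of the
slot `0`, so `Σ_r τ^r · (x ⊗ sym_{S_i}(y)) = sym_{S_{i+1}}(x ⊗ y)` and the cyclic sum of `v` is
`Σ_k C(k,l) · sym_{S_{i+1}}(h_{k+l+a} ⊗ ⋯) + sym_{S_{i+1}}(l_{j-l-a} ⊗ h_0 ⊗ ⋯ ⊗ h_{i-1})`.
Over `𝔽₂` the symmetrization of a tensor with two equal factors vanishes, as `π` and `swap p q * π`
contribute the same term. So the `k`-th term dies: for `k+l+a < i` the factor `h_{k+l+a}` occurs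
twice, for `i ≤ k+l+a ≤ d` its coefficient is even, and for `k+l+a > d` it is `h_{k+l+a} = 0`.
The last term is the symmetrization of a rotation of `h_0 ⊗ ⋯ ⊗ h_{i-1} ⊗ l_{j-l-a}`, i.e. `ρ`.
-/

open PiTensorProduct TensorProduct

/-- The permutation action of `Equiv.Perm (Fin m)` on the `m`-fold tensor power over `𝔽₂`,
permuting the tensor factors. -/
noncomputable def permAct (A : Type) [AddCommGroup A] [Module (ZMod 2) A]
    (m : ℕ) (s : Equiv.Perm (Fin m)) :
    (⨂[ZMod 2] _ : Fin m, A) →ₗ[ZMod 2] ⨂[ZMod 2] _ : Fin m, A :=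
  (PiTensorProduct.reindex (ZMod 2) (fun _ : Fin m => A) s).toLinearMap

open Equiv Finset

open Fin.NatCast in
lemma finRotate_pow_apply_zero (n r : ℕ) : (finRotate (n + 1) ^ r) 0 = (r : Fin (n + 1)) := by
  induction r with
  | zero => rfl
  | succ r ih => rw [pow_succ', Perm.mul_apply, ih, finRotate_apply, Nat.cast_succ]

open Fin.NatCast in
/-- `π = σ * (finRotate ^ r)⁻¹` with `σ 0 = 0` and `r ≤ n` forces `r = π⁻¹ 0`. -/
lemma sum_stabilizer_mul_inv_finRotate_pow {M : Type*} [AddCommMonoid M] (n : ℕ)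
    (G : Perm (Fin (n + 1)) → M) :
    ∑ r ∈ range (n + 1), ∑ σ ∈ univ.filter (fun σ : Perm (Fin (n + 1)) => σ 0 = 0),
      G (σ * (finRotate (n + 1) ^ r)⁻¹) = ∑ π, G π := by
  rw [← sum_product']
  refine sum_nbij' (fun p => p.2 * (finRotate (n + 1) ^ p.1)⁻¹)
    (fun π => (((π⁻¹ 0 : Fin (n + 1)) : ℕ), π * finRotate (n + 1) ^ ((π⁻¹ 0 : Fin (n + 1)) : ℕ)))
    (fun _ _ => mem_univ _) ?_ ?_ (fun π _ => by simp) (fun _ _ => rfl)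
  · intro π _
    refine mem_product.mpr ⟨mem_range.mpr (π⁻¹ 0).isLt, mem_filter.mpr ⟨mem_univ _, ?_⟩⟩
    rw [Perm.mul_apply, finRotate_pow_apply_zero, Fin.cast_val_eq_self, Perm.inv_def,
      apply_symm_apply]
  · rintro ⟨r, σ⟩ hmem
    obtain ⟨hr, hσ⟩ := mem_product.mp hmem
    have hσ0 : σ⁻¹ 0 = 0 := by rw [Perm.inv_eq_iff_eq, (mem_filter.mp hσ).2]
    have hr0 : (σ * (finRotate (n + 1) ^ r)⁻¹)⁻¹ 0 = (r : Fin (n + 1)) := by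
      rw [mul_inv_rev, inv_inv, Perm.mul_apply, hσ0, finRotate_pow_apply_zero]
    rw [hr0, Fin.val_cast_of_lt (mem_range.mp hr), inv_mul_cancel_right]

section Symmetrization

variable (R : Type*) [CommSemiring R] {A : Type*} [AddCommMonoid A] [Module R A]

noncomputable def symTprod {m : ℕ} (f : Fin m → A) : ⨂[R] _ : Fin m, A :=
  ∑ π : Perm (Fin m), ⨂ₜ[R] t, f (π t)

/-- `f 0 ⊗ sym_{S_n}(f 1 ⊗ ⋯ ⊗ f n)`. -/
noncomputable def symTprodTail {n : ℕ} (f : Fin (n + 1) → A) : ⨂[R] _ : Fin (n + 1), A :=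
  ∑ σ ∈ univ.filter (fun σ : Perm (Fin (n + 1)) => σ 0 = 0), ⨂ₜ[R] t, f (σ t)

variable {R}

lemma symTprod_comp_perm {m : ℕ} (f : Fin m → A) (c : Perm (Fin m)) :
    symTprod R (f ∘ c) = symTprod R f :=
  Equiv.sum_comp (Equiv.mulLeft c) fun π : Perm (Fin m) => ⨂ₜ[R] t, f (π t)

lemma symTprod_eq_zero_of_apply_eq_zero {m : ℕ} (f : Fin m → A) {p : Fin m} (hp : f p = 0) :
    symTprod R f = 0 :=
  sum_eq_zero fun π _ => MultilinearMap.map_coord_zero _ (π⁻¹ p) (by simpa using hp)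

lemma symTprod_eq_zero_of_apply_eq [CharP R 2] {m : ℕ} (f : Fin m → A) {p q : Fin m}
    (hpq : p ≠ q) (hf : f p = f q) : symTprod R f = 0 := by
  have hswap : ∀ x, f (swap p q x) = f x := fun x => by
    rcases eq_or_ne x p with rfl | hxp
    · simp [hf]
    rcases eq_or_ne x q with rfl | hxq
    · simp [hf]
    rw [swap_apply_of_ne_of_ne hxp hxq]
  refine sum_involution (fun π _ => swap p q * π) (fun π _ => ?_) (fun π _ _ h => ?_)
    (fun _ _ => mem_univ _) (fun π _ => swap_mul_self_mul p q π)
  · simp only [Perm.mul_apply, hswap, ← two_smul R, CharTwo.two_eq_zero, zero_smul]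
  · exact hpq (swap_eq_one_iff.mp (mul_eq_right.mp h))

end Symmetrization

lemma permAct_tprod {A : Type} [AddCommGroup A] [Module (ZMod 2) A] {m : ℕ}
    (s : Perm (Fin m)) (f : Fin m → A) :
    permAct A m s (⨂ₜ[ZMod 2] t, f t) = ⨂ₜ[ZMod 2] t, f (s⁻¹ t) := by
  rw [permAct, LinearEquiv.coe_toLinearMap, reindex_tprod]
  rfl

lemma sum_permAct_finRotate_pow_symTprodTail {A : Type} [AddCommGroup A] [Module (ZMod 2) A]
    {n : ℕ} (f : Fin (n + 1) → A) :
    ∑ r ∈ range (n + 1), permAct A (n + 1) (finRotate (n + 1) ^ r) (symTprodTail (ZMod 2) f) =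
      symTprod (ZMod 2) f := by
  simp only [symTprodTail, map_sum, permAct_tprod]
  exact sum_stabilizer_mul_inv_finRotate_pow n fun π => ⨂ₜ[ZMod 2] t, f (π t)

section Factors

variable {A : Type*} (h : ℕ → A) (n : ℕ)

def consFactors (y : A) : Fin (n + 1) → A := fun u => if u.val = 0 then y else h (u.val - 1)

def snocFactors (y : A) : Fin (n + 1) → A := fun u => if u.val = n then y else h u.val

/-- The factors `x, h 0, …, h (k-1), h (k+1), …, h (n-1), y`. -/
def omitFactors (k : ℕ) (x y : A) : Fin (n + 1) → A := fun u =>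
  if u.val = 0 then x
  else if u.val - 1 < n - 1 then (if u.val - 1 < k then h (u.val - 1) else h u.val) else y

lemma consFactors_eq_comp_finRotate_symm (y : A) :
    consFactors h n y = snocFactors h n y ∘ (finRotate (n + 1)).symm := by
  funext u
  rcases eq_or_ne u 0 with rfl | hu
  · simp [consFactors, snocFactors]
  · have hu' : u.val ≠ 0 := Fin.val_ne_zero_iff.mpr hu
    have : u.val - 1 ≠ n := by omega
    simp [consFactors, snocFactors, Fin.val_sub_one_of_ne_zero hu, hu', this]

lemma symTprod_omitFactors_eq_zero {R : Type*} [CommSemiring R] [CharP R 2] [AddCommMonoid A]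
    [Module R A] {k b : ℕ} (hk : k < n) (hb : b < n) (hbk : b ≠ k) (y : A) :
    symTprod R (omitFactors h n k (h b) y) = 0 := by
  rcases Nat.lt_or_gt_of_ne hbk with hlt | hgt
  · refine symTprod_eq_zero_of_apply_eq _ (p := 0) (q := ⟨b + 1, by omega⟩) ?_ ?_
    · simp [Fin.ext_iff]
    · simp [omitFactors, show b < n - 1 by omega, hlt]
  · refine symTprod_eq_zero_of_apply_eq _ (p := 0) (q := ⟨b, by omega⟩) ?_ ?_
    · simp [Fin.ext_iff]
      omega
    · simp [omitFactors, show b ≠ 0 by omega, show b - 1 < n - 1 by omega,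
        show ¬b - 1 < k by omega]

end Factors

theorem cyclic_sum_of_v_eq_rho_general (d : ℕ)
    (A : Type) [AddCommGroup A] [Module (ZMod 2) A]
    (h l : ℕ → A)
    (hhtop : ∀ t : ℕ, d < t → h t = 0)
    (i L a : ℕ) (hL1 : 1 ≤ L)
    (j : ℕ)
    (hpar : ∀ k : ℕ, L ≤ k → k ≤ i - 1 → i ≤ k + L + a → k + L + a ≤ d →
      Even (Nat.choose k L)) :
    ∑ r ∈ Finset.range (i+1),
      permAct A (i+1) ((finRotate (i+1)) ^ r)
        ((∑ k ∈ Finset.Icc L (i-1), (Nat.choose k L : ZMod 2) •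
            ∑ τ ∈ Finset.univ.filter (fun τ : Equiv.Perm (Fin (i+1)) => τ 0 = 0),
              ⨂ₜ[ZMod 2] t : Fin (i+1),
                (fun u : Fin (i+1) =>
                  if u.val = 0 then h (k + L + a)
                  else if u.val - 1 < i - 1 then
                    (if u.val - 1 < k then h (u.val - 1) else h u.val)
                  else l j) (τ t)) +
          ∑ τ ∈ Finset.univ.filter (fun τ : Equiv.Perm (Fin (i+1)) => τ 0 = 0),
            ⨂ₜ[ZMod 2] t : Fin (i+1),
              (fun u : Fin (i+1) =>
                if u.val = 0 then l (j - L - a) else h (u.val - 1)) (τ t)) =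
      ∑ s : Equiv.Perm (Fin (i+1)),
        ⨂ₜ[ZMod 2] t : Fin (i+1),
          (fun u : Fin (i+1) =>
            if u.val = i then l (j - L - a) else h u.val) (s t) := by
  change ∑ r ∈ range (i + 1), permAct A (i + 1) (finRotate (i + 1) ^ r)
      (∑ k ∈ Icc L (i - 1), (k.choose L : ZMod 2) •
          symTprodTail (ZMod 2) (omitFactors h i k (h (k + L + a)) (l j)) +
        symTprodTail (ZMod 2) (consFactors h i (l (j - L - a)))) =
    symTprod (ZMod 2) (snocFactors h i (l (j - L - a)))
  have hterm : ∀ k ∈ Icc L (i - 1), (k.choose L : ZMod 2) •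
      symTprod (ZMod 2) (omitFactors h i k (h (k + L + a)) (l j)) = 0 := by
    intro k hk
    obtain ⟨hLk, hki⟩ := mem_Icc.mp hk
    rcases lt_or_ge (k + L + a) i with hb | hb
    · rw [symTprod_omitFactors_eq_zero h i (by omega) hb (by omega), smul_zero]
    rcases le_or_gt (k + L + a) d with hbd | hbd
    · rw [ZMod.natCast_eq_zero_iff_even.mpr (hpar k hLk hki hb hbd), zero_smul]
    · rw [symTprod_eq_zero_of_apply_eq_zero _ (p := 0) (hhtop _ hbd), smul_zero]
  rw [← LinearMap.sum_apply, map_add, map_sum]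
  simp only [map_smul, LinearMap.sum_apply, sum_permAct_finRotate_pow_symTprodTail]
  rw [sum_eq_zero hterm, zero_add, consFactors_eq_comp_finRotate_symm, symTprod_comp_perm]

/-- The computational core of Proposition 4.4: for `τ` the cyclic permutation `(0 1 ⋯ i)` and
`v = Σ_{k=L}^{i−1} C(k,L)·(h_{k+L+a} ⊗ sym_{S_i}((⊗_{s≠k} h_s) ⊗ l_j))
+ l_{j−L−a} ⊗ sym_{S_i}(⊗_t h_t)`, under the parity hypothesis on the binomial
coefficients `C(k,L)` one has `Σ_{r=0}^{i} τ^r·v = sym_{S_{i+1}}(h_0 ⊗ ⋯ ⊗ h_{i−1} ⊗ l_{j−L−a})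
= ρ_{i,j−L−a}` (with `h_t = 0` for `t > d`; `sym_{S_i}` acts on the last `i` slots). -/
theorem cyclic_sum_of_v_eq_rho (d : ℕ) (hd : 2 ≤ d)
    (A : Type) [AddCommGroup A] [Module (ZMod 2) A]
    (h l : ℕ → A)
    (hhtop : ∀ t : ℕ, d < t → h t = 0)
    (i L a : ℕ) (hi2 : 2 ≤ i) (hid : i ≤ d) (hL1 : 1 ≤ L) (hLi : L ≤ i - 1)
    (j : ℕ) (hLaj : L + a ≤ j) (hjd : j ≤ d)
    (hpar : ∀ k : ℕ, L ≤ k → k ≤ i - 1 → i ≤ k + L + a → k + L + a ≤ d →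
      Even (Nat.choose k L)) :
    ∑ r ∈ Finset.range (i+1),
      permAct A (i+1) ((finRotate (i+1)) ^ r)
        ((∑ k ∈ Finset.Icc L (i-1), (Nat.choose k L : ZMod 2) •
            ∑ τ ∈ Finset.univ.filter (fun τ : Equiv.Perm (Fin (i+1)) => τ 0 = 0),
              ⨂ₜ[ZMod 2] t : Fin (i+1),
                (fun u : Fin (i+1) =>
                  if u.val = 0 then h (k + L + a)
                  else if u.val - 1 < i - 1 then
                    (if u.val - 1 < k then h (u.val - 1) else h u.val)
                  else l j) (τ t)) +
          ∑ τ ∈ Finset.univ.filter (fun τ : Equiv.Perm (Fin (i+1)) => τ 0 = 0),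
            ⨂ₜ[ZMod 2] t : Fin (i+1),
              (fun u : Fin (i+1) =>
                if u.val = 0 then l (j - L - a) else h (u.val - 1)) (τ t)) =
      ∑ s : Equiv.Perm (Fin (i+1)),
        ⨂ₜ[ZMod 2] t : Fin (i+1),
          (fun u : Fin (i+1) =>
            if u.val = i then l (j - L - a) else h u.val) (s t) :=
  cyclic_sum_of_v_eq_rho_general d A h l hhtop i L a hL1 j hpar
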